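/- Let ψ be an abelian map on a group G and m, n ≥ 0. The operations ∘_m and ∘_n coincide (g ∘_m h = g ∘_n h for all g, h ∈ G) if and only if ψ_m(g)·ψ_n(g⁻¹) lies in the center Z(G) of G for every g ∈ G. -/

import Mathlib

/-! Since `ψ` has abelian image and every `ψ_n(g)` lies in that image, `ψ_n(g⁻¹) = ψ_n(g)⁻¹`,
so `g ∘_n h = g · (ψ_n(g)⁻¹ h ψ_n(g))`. Hence `∘_m = ∘_n` says exactly that conjugation by
`ψ_m(g)` and by `ψ_n(g)` agree for every `g`, i.e. that `ψ_m(g) ψ_n(g)⁻¹` is central. -/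

/-- `aDelta ψ g = g · ψ(g⁻¹)`, the map `δ = 1 - ψ`. -/
def aDelta {G : Type*} [Group G] (ψ : G → G) (g : G) : G := g * ψ g⁻¹

/-- `aPsi ψ n g = (δⁿ(g))⁻¹ · g`, the map `ψ_n = -(1-ψ)ⁿ + 1` (so `ψ_0 = 0`, `ψ_1 = ψ`). -/
def aPsi {G : Type*} [Group G] (ψ : G → G) (n : ℕ) (g : G) : G :=
  ((aDelta ψ)^[n] g)⁻¹ * g

/-- `g ∘_n h = g · ψ_n(g⁻¹) · h · ψ_n(g)`. -/
def aCirc {G : Type*} [Group G] (ψ : G → G) (n : ℕ) (g h : G) : G :=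
  g * aPsi ψ n g⁻¹ * h * aPsi ψ n g

theorem Subgroup.conj_eq_conj_iff_mul_inv_mem_center {G : Type*} [Group G] {p q : G} :
    (∀ h, p⁻¹ * h * p = q⁻¹ * h * q) ↔ p * q⁻¹ ∈ Subgroup.center G := by
  rw [Subgroup.mem_center_iff]
  refine forall_congr' fun h => ?_
  constructor
  · intro H
    calc h * (p * q⁻¹) = p * (p⁻¹ * h * p) * q⁻¹ := by group
      _ = p * q⁻¹ * h := by rw [H]; group
  · intro H
    calc p⁻¹ * h * p = p⁻¹ * (h * (p * q⁻¹)) * q := by group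
      _ = q⁻¹ * h * q := by rw [H]; group

section AbelianMap

variable {G : Type*} [Group G]

theorem aDelta_iterate_eq_mul_inv_aPsi (ψ : G → G) (n : ℕ) (g : G) :
    (aDelta ψ)^[n] g = g * (aPsi ψ n g)⁻¹ := by
  simp [aPsi]

variable (ψ : G →* G)

theorem aPsi_succ (n : ℕ) (g : G) :
    aPsi ψ (n + 1) g = ψ g * (ψ (aPsi ψ n g))⁻¹ * aPsi ψ n g := by
  rw [aPsi, Function.iterate_succ_apply', aDelta_iterate_eq_mul_inv_aPsi, aDelta]
  simp only [map_inv, map_mul, inv_inv, mul_inv_rev, mul_assoc, inv_mul_cancel, mul_one]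

theorem aPsi_mem_range (n : ℕ) (g : G) : aPsi ψ n g ∈ ψ.range := by
  induction n with
  | zero => simp [aPsi]
  | succ n ih =>
    rw [aPsi_succ]
    exact mul_mem (mul_mem ⟨g, rfl⟩ (inv_mem ⟨_, rfl⟩)) ih

variable {ψ} (hab : ∀ a b : G, Commute (ψ a) (ψ b))
include hab

theorem aPsi_inv (n : ℕ) (g : G) : aPsi ψ n g⁻¹ = (aPsi ψ n g)⁻¹ := by
  induction n with
  | zero => simp [aPsi]
  | succ n ih =>
    obtain ⟨y, hy⟩ := aPsi_mem_range ψ n g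
    rw [aPsi_succ, aPsi_succ, ih, ← hy, map_inv, map_inv, inv_inv]
    -- `ψ g`, `ψ (ψ y)` and `ψ y` pairwise commute
    rw [mul_inv_rev, mul_inv_rev, inv_inv, (hab (ψ y) g).inv_right.eq, ← mul_assoc,
      (hab y g).inv_inv.eq, mul_assoc, mul_assoc, (hab (ψ y) y).inv_right.eq]

theorem aCirc_eq_mul_conj (n : ℕ) (g h : G) :
    aCirc ψ n g h = g * ((aPsi ψ n g)⁻¹ * h * aPsi ψ n g) := by
  rw [aCirc, aPsi_inv hab]
  group

end AbelianMap

/-- `∘_m = ∘_n` if and only if `(ψ_m - ψ_n)(G) ⊆ Z(G)`,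
i.e. `ψ_m(g)·ψ_n(g⁻¹) ∈ Z(G)` for all `g`. -/
theorem stmt10 {G : Type*} [Group G] (ψ : G → G)
    (hψ : ∀ a b : G, ψ (a * b) = ψ a * ψ b)
    (hab : ∀ a b : G, ψ a * ψ b = ψ b * ψ a)
    (m n : ℕ) :
    (∀ g h : G, aCirc ψ m g h = aCirc ψ n g h) ↔
      (∀ g : G, aPsi ψ m g * aPsi ψ n g⁻¹ ∈ Subgroup.center G) := by
  let φ : G →* G := MonoidHom.mk' ψ hψ
  have hφ : ∀ a b : G, Commute (φ a) (φ b) := hab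
  change (∀ g h : G, aCirc φ m g h = aCirc φ n g h) ↔
    (∀ g : G, aPsi φ m g * aPsi φ n g⁻¹ ∈ Subgroup.center G)
  simp only [aCirc_eq_mul_conj hφ, mul_right_inj, aPsi_inv hφ]
  exact forall_congr' fun g => Subgroup.conj_eq_conj_iff_mul_inv_mem_center
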